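/- The decomposition (U*, v*, ω*) = (U, v, ω) + (ρ⁻¹∇p, −m⁻¹∫_Γ p n dS, −𝕀⁻¹∫_Γ p J dS) is orthogonal with respect to the energy inner product ⟨(U₁,v₁,ω₁),(U₂,v₂,ω₂)⟩_E = ∫_Ω ½ρ U₁·U₂ dx + ½m v₁·v₂ + ½ω₁·𝕀ω₂, provided (U,v,ω) satisfies ∇·U = 0 in Ω, U·n = v·n + ω·J on Γ, and U·n = 0 on Γ'. -/

import Mathlib

open MeasureTheory Matrix

/-- Cross product of vectors in `ℝ³`. -/
def cross3 (u v : Fin 3 → ℝ) : Fin 3 → ℝ :=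
  ![u 1 * v 2 - u 2 * v 1, u 2 * v 0 - u 0 * v 2, u 0 * v 1 - u 1 * v 0]

/-- Gradient of a scalar field on `ℝ³`. -/
noncomputable def grad3 (p : (Fin 3 → ℝ) → ℝ) (x : Fin 3 → ℝ) : Fin 3 → ℝ :=
  fun i => fderiv ℝ p x (Pi.single i 1)

/-! Since `∇·U = 0`, `div (p U) = U·∇p`, so the divergence theorem turns the fluid term
`∫_Ω U·∇p` into the boundary flux `∫_{∂Ω} p U·n`. The boundary conditions make the flux vanish on
`Γ'` and equal `v·(p n) + ω·(p J)` on `Γ`, so it equals `v·∫_Γ p n + ω·∫_Γ p J`, which the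
rigid-body terms of the energy product cancel exactly. -/

namespace MeasureTheory

variable {α β : Type*} [MeasurableSpace α] {μ : Measure α}

/-- `s` need not be measurable, so agreement on `s` alone does not give agreement
`μ.restrict s`-a.e.; measurability of `f` and `g` is what makes it work. -/
theorem ae_restrict_eq_of_eqOn [TopologicalSpace β] [TopologicalSpace.MetrizableSpace β]
    {s : Set α} {f g : α → β} (hf : AEStronglyMeasurable f (μ.restrict s))
    (hg : AEStronglyMeasurable g (μ.restrict s)) (hfg : Set.EqOn f g s) :
    f =ᵐ[μ.restrict s] g := by
  have hmk : ∀ᵐ x ∂μ.restrict s, hf.mk f x = hg.mk g x := by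
    have hS := hf.stronglyMeasurable_mk.measurableSet_eq_fun hg.stronglyMeasurable_mk
    have hN := ae_iff.1 (hf.ae_eq_mk.and hg.ae_eq_mk)
    rw [ae_iff, ← Set.compl_ofPred, Measure.restrict_apply hS.compl]
    refine measure_mono_null ?_ (le_zero_iff.1 ((Measure.le_restrict_apply s _).trans_eq hN))
    rintro x ⟨hx, hxs⟩
    refine ⟨fun ⟨hfx, hgx⟩ => hx ?_, hxs⟩
    rw [Set.mem_ofPred_eq, ← hfx, ← hgx, hfg hxs]
  filter_upwards [hf.ae_eq_mk, hg.ae_eq_mk, hmk] with x hfx hgx hx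
  rw [hfx, hgx, hx]

theorem setIntegral_eq_of_eqOn_of_forall_sdiff_eq_zero {E : Type*} [NormedAddCommGroup E]
    [NormedSpace ℝ E] {s t : Set α} {f g : α → E} (ht : MeasurableSet t) (hst : s ⊆ t)
    (hf : AEStronglyMeasurable f (μ.restrict s)) (hg : AEStronglyMeasurable g (μ.restrict s))
    (hfg : Set.EqOn f g s) (hf0 : ∀ x ∈ t \ s, f x = 0) :
    ∫ x in t, f x ∂μ = ∫ x in s, g x ∂μ := by
  rw [setIntegral_eq_of_subset_of_forall_sdiff_eq_zero ht hst hf0]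
  exact integral_congr_ae (ae_restrict_eq_of_eqOn hf hg hfg)

theorem Integrable.const_dotProduct {ι : Type*} [Fintype ι] {F : α → ι → ℝ}
    (hF : Integrable F μ) (v : ι → ℝ) : Integrable (fun x => v ⬝ᵥ F x) μ := by
  simp only [dotProduct]
  exact integrable_finsetSum _ fun i _ => (hF.eval i).const_mul (v i)

theorem AEStronglyMeasurable.dotProduct {ι : Type*} [Fintype ι] {F G : α → ι → ℝ}
    (hF : AEStronglyMeasurable F μ) (hG : AEStronglyMeasurable G μ) :
    AEStronglyMeasurable (fun x => F x ⬝ᵥ G x) μ :=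
  Continuous.comp_aestronglyMeasurable₂ (g := (· ⬝ᵥ ·)) (by fun_prop) hF hG

theorem integral_dotProduct {ι : Type*} [Fintype ι] {F : α → ι → ℝ} (hF : Integrable F μ)
    (v : ι → ℝ) : ∫ x, v ⬝ᵥ F x ∂μ = v ⬝ᵥ ∫ x, F x ∂μ := by
  simp only [dotProduct]
  rw [integral_finsetSum _ fun i _ => (hF.eval i).const_mul (v i)]
  simp_rw [integral_const_mul, eval_integral hF.eval]

end MeasureTheory

theorem fderiv_apply_eq_dotProduct_grad3 (p : (Fin 3 → ℝ) → ℝ) (x u : Fin 3 → ℝ) :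
    fderiv ℝ p x u = u ⬝ᵥ grad3 p x := by
  conv_lhs => rw [pi_eq_sum_univ' u]
  simp [dotProduct, grad3]

theorem trace_fderiv_smul {p : (Fin 3 → ℝ) → ℝ} {U : (Fin 3 → ℝ) → Fin 3 → ℝ} {x : Fin 3 → ℝ}
    (hp : DifferentiableAt ℝ p x) (hU : DifferentiableAt ℝ U x) :
    LinearMap.trace ℝ _ (fderiv ℝ (fun y => p y • U y) x : (Fin 3 → ℝ) →ₗ[ℝ] (Fin 3 → ℝ))
      = p x * LinearMap.trace ℝ _ (fderiv ℝ U x : (Fin 3 → ℝ) →ₗ[ℝ] (Fin 3 → ℝ))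
        + U x ⬝ᵥ grad3 p x := by
  rw [fderiv_fun_smul hp hU, ContinuousLinearMap.toLinearMap_add, map_add,
    ContinuousLinearMap.toLinearMap_smul, map_smul]
  simp only [smul_eq_mul, ContinuousLinearMap.coe_smulRight, LinearMap.trace_smulRight,
    ContinuousLinearMap.coe_coe, fderiv_apply_eq_dotProduct_grad3]

theorem setIntegral_dotProduct_grad3_eq_of_divergence_free {Ω S : Set (Fin 3 → ℝ)}
    {σ : Measure (Fin 3 → ℝ)} {n U : (Fin 3 → ℝ) → Fin 3 → ℝ} {p : (Fin 3 → ℝ) → ℝ}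
    (hΩ : MeasurableSet Ω) (hU : Differentiable ℝ U) (hp : Differentiable ℝ p)
    (hdivfree : ∀ x ∈ Ω,
      LinearMap.trace ℝ (Fin 3 → ℝ) (fderiv ℝ U x : (Fin 3 → ℝ) →ₗ[ℝ] (Fin 3 → ℝ)) = 0)
    (hdiv : ∫ x in Ω, LinearMap.trace ℝ (Fin 3 → ℝ)
        (fderiv ℝ (fun y => p y • U y) x : (Fin 3 → ℝ) →ₗ[ℝ] (Fin 3 → ℝ))
      = ∫ x in S, (p x • U x) ⬝ᵥ n x ∂σ) :
    ∫ x in Ω, U x ⬝ᵥ grad3 p x = ∫ x in S, U x ⬝ᵥ (p x • n x) ∂σ := by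
  simp only [smul_dotProduct, dotProduct_smul] at hdiv ⊢
  rw [← hdiv]
  refine setIntegral_congr_fun hΩ fun x hx => ?_
  rw [trace_fderiv_smul (hp x) (hU x), hdivfree x hx, mul_zero, zero_add]

theorem augmented_hodge_decomposition_orthogonal_general
    (Ω : Set (Fin 3 → ℝ)) (hopen : IsOpen Ω)
    (Γ Γ' : Set (Fin 3 → ℝ)) (hbdry : Γ ∪ Γ' = frontier Ω)
    (σ : Measure (Fin 3 → ℝ))
    (n : (Fin 3 → ℝ) → (Fin 3 → ℝ))
    (ρ m : ℝ) (hρ : 0 < ρ) (hm : 0 < m)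
    (𝕀 : Matrix (Fin 3) (Fin 3) ℝ) (h𝕀 : 𝕀.PosDef)
    (c : Fin 3 → ℝ) (v ω : Fin 3 → ℝ)
    (U : (Fin 3 → ℝ) → (Fin 3 → ℝ)) (p : (Fin 3 → ℝ) → ℝ)
    (hU : ContDiff ℝ 1 U) (hp : ContDiff ℝ 1 p)
    (hdivfree : ∀ x ∈ Ω,
      LinearMap.trace ℝ (Fin 3 → ℝ) (fderiv ℝ U x : (Fin 3 → ℝ) →ₗ[ℝ] (Fin 3 → ℝ)) = 0)
    (hbcΓ : ∀ x ∈ Γ, U x ⬝ᵥ n x = v ⬝ᵥ n x + ω ⬝ᵥ cross3 (x - c) (n x))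
    (hbcΓ' : ∀ x ∈ Γ', U x ⬝ᵥ n x = 0)
    (hint2 : IntegrableOn (fun x => p x • n x) Γ σ)
    (hint3 : IntegrableOn (fun x => p x • cross3 (x - c) (n x)) Γ σ)
    (hdiv : ∀ F : (Fin 3 → ℝ) → (Fin 3 → ℝ), ContDiff ℝ 1 F →
      ∫ x in Ω, LinearMap.trace ℝ (Fin 3 → ℝ) (fderiv ℝ F x : (Fin 3 → ℝ) →ₗ[ℝ] (Fin 3 → ℝ))
        = ∫ x in Γ ∪ Γ', F x ⬝ᵥ n x ∂σ) :
    (∫ x in Ω, (1 / 2) * ρ * (U x ⬝ᵥ ((1 / ρ) • grad3 p x)))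
      + (1 / 2) * m * (v ⬝ᵥ (-(1 / m) • (∫ x in Γ, p x • n x ∂σ)))
      + (1 / 2) * (ω ⬝ᵥ (𝕀 *ᵥ (-(𝕀⁻¹ *ᵥ (∫ x in Γ, p x • cross3 (x - c) (n x) ∂σ)))))
      = 0 := by
  have hv := hint2.const_dotProduct v
  have hω := hint3.const_dotProduct ω
  have hboundary : ∫ x in Γ ∪ Γ', U x ⬝ᵥ (p x • n x) ∂σ
      = ∫ x in Γ, v ⬝ᵥ (p x • n x) + ω ⬝ᵥ (p x • cross3 (x - c) (n x)) ∂σ := by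
    refine setIntegral_eq_of_eqOn_of_forall_sdiff_eq_zero
      (hbdry ▸ isClosed_frontier.measurableSet) Set.subset_union_left
      (hU.continuous.aestronglyMeasurable.dotProduct hint2.aestronglyMeasurable)
      (hv.add hω).aestronglyMeasurable (fun x hx => ?_) (fun x hx => ?_)
    · simp only [dotProduct_smul, smul_eq_mul, hbcΓ x hx]
      ring
    · simp [hbcΓ' x (hx.1.resolve_left hx.2)]
  have key : ∫ x in Ω, U x ⬝ᵥ grad3 p x
      = v ⬝ᵥ (∫ x in Γ, p x • n x ∂σ) + ω ⬝ᵥ (∫ x in Γ, p x • cross3 (x - c) (n x) ∂σ) := by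
    rw [setIntegral_dotProduct_grad3_eq_of_divergence_free hopen.measurableSet
      (hU.differentiable one_ne_zero) (hp.differentiable one_ne_zero) hdivfree
      (hdiv _ (hp.smul hU)), hboundary, integral_add hv hω, integral_dotProduct hint2,
      integral_dotProduct hint3]
  have h𝕀inv : 𝕀 * 𝕀⁻¹ = 1 := 𝕀.mul_nonsing_inv ((𝕀.isUnit_iff_isUnit_det).1 h𝕀.isUnit)
  have hρ_cancel : ∀ a : ℝ, 1 / 2 * ρ * (1 / ρ * a) = 1 / 2 * a := fun a => by field_simp
  simp only [dotProduct_smul, smul_eq_mul, mulVec_neg, mulVec_mulVec, h𝕀inv, one_mulVec,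
    dotProduct_neg, hρ_cancel]
  rw [integral_const_mul, key]
  field_simp
  ring

/-- The decomposition
`(U*, v*, ω*) = (U, v, ω) + (ρ⁻¹∇p, −m⁻¹∫_Γ p n dS, −𝕀⁻¹∫_Γ p J dS)` is orthogonal with
respect to the energy inner product
`⟨(U₁,v₁,ω₁),(U₂,v₂,ω₂)⟩_E = ∫_Ω ½ρ U₁·U₂ dx + ½m v₁·v₂ + ½ω₁·𝕀ω₂`,
provided `(U,v,ω)` satisfies `∇·U = 0` in `Ω`, `U·n = v·n + ω·J` on `Γ`,
and `U·n = 0` on `Γ'`, where `J(x) = (x−c) × n(x)`. -/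
theorem augmented_hodge_decomposition_orthogonal
    (Ω : Set (Fin 3 → ℝ)) (hopen : IsOpen Ω) (hbd : Bornology.IsBounded Ω)
    (Γ Γ' : Set (Fin 3 → ℝ)) (hdisj : Disjoint Γ Γ') (hbdry : Γ ∪ Γ' = frontier Ω)
    (σ : Measure (Fin 3 → ℝ)) (hσfin : σ (Γ ∪ Γ') ≠ ⊤)
    (n : (Fin 3 → ℝ) → (Fin 3 → ℝ)) (hunit : ∀ x ∈ Γ ∪ Γ', ∑ i, n x i ^ 2 = 1)
    (ρ m : ℝ) (hρ : 0 < ρ) (hm : 0 < m)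
    (𝕀 : Matrix (Fin 3) (Fin 3) ℝ) (h𝕀 : 𝕀.PosDef)
    (c : Fin 3 → ℝ) (v ω : Fin 3 → ℝ)
    (U : (Fin 3 → ℝ) → (Fin 3 → ℝ)) (p : (Fin 3 → ℝ) → ℝ)
    (hU : ContDiff ℝ 1 U) (hp : ContDiff ℝ 1 p)
    (hdivfree : ∀ x ∈ Ω,
      LinearMap.trace ℝ (Fin 3 → ℝ) (fderiv ℝ U x : (Fin 3 → ℝ) →ₗ[ℝ] (Fin 3 → ℝ)) = 0)
    (hbcΓ : ∀ x ∈ Γ, U x ⬝ᵥ n x = v ⬝ᵥ n x + ω ⬝ᵥ cross3 (x - c) (n x))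
    (hbcΓ' : ∀ x ∈ Γ', U x ⬝ᵥ n x = 0)
    (hint1 : IntegrableOn (fun x => U x ⬝ᵥ grad3 p x) Ω)
    (hint2 : IntegrableOn (fun x => p x • n x) Γ σ)
    (hint3 : IntegrableOn (fun x => p x • cross3 (x - c) (n x)) Γ σ)
    (hdiv : ∀ F : (Fin 3 → ℝ) → (Fin 3 → ℝ), ContDiff ℝ 1 F →
      ∫ x in Ω, LinearMap.trace ℝ (Fin 3 → ℝ) (fderiv ℝ F x : (Fin 3 → ℝ) →ₗ[ℝ] (Fin 3 → ℝ))
        = ∫ x in Γ ∪ Γ', F x ⬝ᵥ n x ∂σ) :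
    (∫ x in Ω, (1 / 2) * ρ * (U x ⬝ᵥ ((1 / ρ) • grad3 p x)))
      + (1 / 2) * m * (v ⬝ᵥ (-(1 / m) • (∫ x in Γ, p x • n x ∂σ)))
      + (1 / 2) * (ω ⬝ᵥ (𝕀 *ᵥ (-(𝕀⁻¹ *ᵥ (∫ x in Γ, p x • cross3 (x - c) (n x) ∂σ)))))
      = 0 :=
  augmented_hodge_decomposition_orthogonal_general Ω hopen Γ Γ' hbdry σ n ρ m hρ hm 𝕀 h𝕀 c v ω U p
    hU hp hdivfree hbcΓ hbcΓ' hint2 hint3 hdiv
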